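/- Hashing proposition: let Sigma in GL(n, F_2), p in F_2^n, B = 2^b, and define u_{Sigma,p}(m) = sqrt(N/B) * x_{Sigma Psi_b m + p} for m in F_2^b. Then the B-dimensional WHT of u_{Sigma,p} satisfies U_{Sigma,p}(k) = sum over j in F_2^n with H j = k of X_j (-1)^{<p,j>}, where H = Psi_b^T Sigma^T. -/

import Mathlib

open Matrix Finset

/-- Inner product over `𝔽₂`. -/
def ip {ι : Type*} [Fintype ι] (u v : ι → ZMod 2) : ZMod 2 := ∑ t, u t * v t

/-- `(-1)^b` for `b ∈ 𝔽₂`. -/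
def sgn (a : ZMod 2) : ℝ := (-1 : ℝ) ^ a.val

/-- The Walsh-Hadamard transform. -/
noncomputable def WHT {ι : Type*} [DecidableEq ι] [Fintype ι]
    (x : (ι → ZMod 2) → ℝ) (k : ι → ZMod 2) : ℝ :=
  (Real.sqrt (Fintype.card (ι → ZMod 2)))⁻¹ * ∑ m, sgn (ip k m) * x m

/-- `Ψ_b : 𝔽₂ᵇ → 𝔽₂ⁿ`, placing a `b`-bit vector in the last `b` coordinates. -/
def Psi (n b : ℕ) (hb : b ≤ n) (m : Fin b → ZMod 2) : Fin n → ZMod 2 :=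
  fun i => if _ : (i : ℕ) < n - b then 0 else m ⟨(i : ℕ) - (n - b), by have := i.isLt; omega⟩

/-- `Ψ_bᵀ : 𝔽₂ⁿ → 𝔽₂ᵇ`, extracting the last `b` coordinates. -/
def PsiT (n b : ℕ) (hb : b ≤ n) (j : Fin n → ZMod 2) : Fin b → ZMod 2 :=
  fun t => j ⟨n - b + (t : ℕ), by have := t.isLt; omega⟩

/-
Substituting `s = Σ t + p` shows that the WHT of the signal `y t = x (Σ t + p)` at `Σᵀ j` is
`X_j (-1)^⟨p, j⟩`; reindexing by `j ↦ Σᵀ j`, the right-hand side becomes the sum of the WHT of `y`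
over the coset `{v | Ψ_bᵀ v = k}`. Splitting `𝔽₂ⁿ = 𝔽₂^(n-b) × 𝔽₂ᵇ`, the characters
`(-1)^⟨v, t⟩` summed over that coset vanish unless `t` lies in the image of `Ψ_b`, by
orthogonality of the characters of `𝔽₂^(n-b)`; what remains is the WHT of the subsampled signal
`y ∘ Ψ_b`, and the normalisations `1/√N`, `1/√B` account for the factor `√(N/B)`.
-/

lemma sgn_zero : sgn 0 = 1 := by simp [sgn]

lemma sgn_one : sgn 1 = -1 := by simp [sgn, ZMod.val_one]

lemma sgn_add (a b : ZMod 2) : sgn (a + b) = sgn a * sgn b := by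
  rw [sgn, ZMod.val_add, ← neg_one_pow_eq_pow_mod_two, pow_add, sgn, sgn]

lemma sgn_mul_self (a : ZMod 2) : sgn a * sgn a = 1 := by
  rw [← sgn_add, CharTwo.add_self_eq_zero, sgn_zero]

lemma sgn_sum {ι : Type*} (s : Finset ι) (f : ι → ZMod 2) :
    sgn (∑ i ∈ s, f i) = ∏ i ∈ s, sgn (f i) := by
  classical
  induction s using Finset.induction_on with
  | empty => rw [sum_empty, prod_empty, sgn_zero]
  | insert a s ha ih => rw [sum_insert ha, prod_insert ha, sgn_add, ih]

lemma ip_eq_dotProduct {ι : Type*} [Fintype ι] (u v : ι → ZMod 2) : ip u v = u ⬝ᵥ v := rfl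

lemma sum_sgn_mul (a : ZMod 2) : ∑ c : ZMod 2, sgn (c * a) = if a = 0 then 2 else 0 := by
  rw [show (univ : Finset (ZMod 2)) = {0, 1} from rfl, sum_pair zero_ne_one]
  obtain rfl | rfl : a = 0 ∨ a = 1 := by revert a; decide
  · norm_num [sgn_zero]
  · norm_num [sgn_zero, sgn_one]

lemma sum_sgn_ip_left {ι : Type*} [Fintype ι] [DecidableEq ι] (y : ι → ZMod 2) :
    ∑ w : ι → ZMod 2, sgn (ip w y) = if y = 0 then 2 ^ Fintype.card ι else 0 := by
  simp_rw [ip, sgn_sum, ← Fintype.prod_sum (fun i c => sgn (c * y i)), sum_sgn_mul,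
    Fintype.prod_ite_zero, funext_iff]
  simp

lemma mulVec_bijective_of_isUnit_det {ι : Type*} [Fintype ι] [DecidableEq ι]
    {A : Matrix ι ι (ZMod 2)} (hA : IsUnit A.det) : Function.Bijective A.mulVec :=
  have hA' : IsUnit A := (isUnit_iff_isUnit_det A).2 hA
  ⟨mulVec_injective_iff_isUnit.2 hA', mulVec_surjective_iff_isUnit.2 hA'⟩

lemma WHT_comp_affine {ι : Type*} [Fintype ι] [DecidableEq ι] (x : (ι → ZMod 2) → ℝ)
    {A : Matrix ι ι (ZMod 2)} (hA : IsUnit A.det) (p j : ι → ZMod 2) :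
    WHT (fun t => x (A *ᵥ t + p)) (Aᵀ *ᵥ j) = WHT x j * sgn (ip p j) := by
  have hbij : Function.Bijective (fun t => A *ᵥ t + p) :=
    (Equiv.addRight p).bijective.comp (mulVec_bijective_of_isUnit_det hA)
  rw [WHT, WHT, mul_assoc, sum_mul]
  congr 1
  refine Fintype.sum_bijective _ hbij _ _ fun t => ?_
  rw [ip_eq_dotProduct, ip_eq_dotProduct, ip_eq_dotProduct, dotProduct_add, dotProduct_mulVec,
    mulVec_transpose, dotProduct_comm j p, sgn_add]
  linear_combination -(sgn ((j ᵥ* A) ⬝ᵥ t) * x (A *ᵥ t + p)) * sgn_mul_self (p ⬝ᵥ j)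

lemma inv_sqrt_two_pow_mul_two_pow_sub {n b : ℕ} (hb : b ≤ n) :
    (√(2 ^ n))⁻¹ * 2 ^ (n - b) = (√(2 ^ b))⁻¹ * √((2 ^ n : ℝ) / 2 ^ b) := by
  rw [← pow_sub_mul_pow (2 : ℝ) hb, mul_div_cancel_right₀ _ (by positivity),
    Real.sqrt_mul (by positivity)]
  have hc : 0 < √((2 : ℝ) ^ (n - b)) := by positivity
  have hB : 0 < √((2 : ℝ) ^ b) := by positivity
  field_simp
  rw [Real.sq_sqrt (by positivity)]

section Split

variable {n b : ℕ} (hb : b ≤ n)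

def splitEquiv : ((Fin (n - b) → ZMod 2) × (Fin b → ZMod 2)) ≃ (Fin n → ZMod 2) where
  toFun q i := if h : (i : ℕ) < n - b then q.1 ⟨i, h⟩
    else q.2 ⟨(i : ℕ) - (n - b), by have := i.isLt; omega⟩
  invFun v := (fun t => v ⟨t, by have := t.isLt; omega⟩, PsiT n b hb v)
  left_inv q := by
    ext t
    · simp
    · simp [PsiT]
  right_inv v := by
    ext i
    by_cases h : (i : ℕ) < n - b
    · simp [h]
    · simp only [h, ↓reduceDIte, PsiT]; congr; omega

lemma PsiT_splitEquiv (q : (Fin (n - b) → ZMod 2) × (Fin b → ZMod 2)) :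
    PsiT n b hb (splitEquiv hb q) = q.2 :=
  congrArg Prod.snd ((splitEquiv hb).left_inv q)

lemma splitEquiv_zero_left (m : Fin b → ZMod 2) : splitEquiv hb (0, m) = Psi n b hb m := by
  ext i
  by_cases h : (i : ℕ) < n - b <;> simp [splitEquiv, Psi, h]

lemma ip_splitEquiv (q q' : (Fin (n - b) → ZMod 2) × (Fin b → ZMod 2)) :
    ip (splitEquiv hb q) (splitEquiv hb q') = ip q.1 q'.1 + ip q.2 q'.2 := by
  have hn : n - b + b = n := by omega
  rw [ip, ← Fin.sum_congr' _ hn, Fin.sum_univ_add]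
  simp [splitEquiv, ip]

lemma sum_filter_PsiT_eq_sum_splitEquiv {M : Type*} [AddCommMonoid M] (k : Fin b → ZMod 2)
    (f : (Fin n → ZMod 2) → M) :
    ∑ v ∈ univ.filter (fun v => PsiT n b hb v = k), f v = ∑ w, f (splitEquiv hb (w, k)) := by
  rw [sum_filter, ← (splitEquiv hb).sum_comp, Fintype.sum_prod_type]
  simp only [PsiT_splitEquiv, sum_ite_eq', mem_univ, if_true]

lemma sum_filter_PsiT_sgn_ip (k : Fin b → ZMod 2) (q : (Fin (n - b) → ZMod 2) × (Fin b → ZMod 2)) :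
    ∑ v ∈ univ.filter (fun v => PsiT n b hb v = k), sgn (ip v (splitEquiv hb q)) =
      if q.1 = 0 then 2 ^ (n - b) * sgn (ip k q.2) else 0 := by
  simp_rw [sum_filter_PsiT_eq_sum_splitEquiv, ip_splitEquiv, sgn_add, ← sum_mul, sum_sgn_ip_left,
    Fintype.card_fin, ite_mul, zero_mul]

lemma sum_filter_PsiT_WHT (y : (Fin n → ZMod 2) → ℝ) (k : Fin b → ZMod 2) :
    ∑ v ∈ univ.filter (fun v => PsiT n b hb v = k), WHT y v =
      WHT (fun m => √((2 ^ n : ℝ) / 2 ^ b) * y (Psi n b hb m)) k := by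
  have hfibre : ∑ v ∈ univ.filter (fun v => PsiT n b hb v = k), ∑ t, sgn (ip v t) * y t =
      2 ^ (n - b) * ∑ m, sgn (ip k m) * y (Psi n b hb m) := by
    calc _ = ∑ t, (∑ v ∈ univ.filter (fun v => PsiT n b hb v = k), sgn (ip v t)) * y t := by
            rw [sum_comm]; simp_rw [sum_mul]
      _ = ∑ q, (if q.1 = 0 then 2 ^ (n - b) * sgn (ip k q.2) else 0) * y (splitEquiv hb q) := by
            rw [← (splitEquiv hb).sum_comp]; simp_rw [sum_filter_PsiT_sgn_ip]
      _ = _ := by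
            simp_rw [Fintype.sum_prod_type, ite_mul, zero_mul, sum_comm (γ := Fin (n - b) → ZMod 2),
              sum_ite_eq', if_pos (mem_univ _), splitEquiv_zero_left, mul_sum, mul_assoc]
  simp only [WHT, Fintype.card_fun, ZMod.card, Fintype.card_fin, Nat.cast_pow, Nat.cast_ofNat,
    mul_left_comm (sgn _), ← mul_sum, hfibre]
  rw [← mul_assoc, inv_sqrt_two_pow_mul_two_pow_sub hb, mul_assoc]

end Split

/-- Hashing proposition: the `B = 2^b` dimensional WHT of
`u(m) = √(N/B) · x(Σ Ψ_b m + p)` computes the hash outputs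
`U(k) = ∑_{j : Ψ_bᵀ Σᵀ j = k} X_j (-1)^⟨p,j⟩`. -/
theorem stmt7 (n b : ℕ) (hb : b ≤ n) (x : (Fin n → ZMod 2) → ℝ)
    (A : Matrix (Fin n) (Fin n) (ZMod 2)) (hA : IsUnit A.det)
    (p : Fin n → ZMod 2) (k : Fin b → ZMod 2) :
    WHT (fun m => Real.sqrt ((2 ^ n : ℝ) / (2 ^ b : ℝ)) *
        x (A.mulVec (Psi n b hb m) + p)) k =
      ∑ j ∈ Finset.univ.filter
          (fun j : Fin n → ZMod 2 => PsiT n b hb (Aᵀ.mulVec j) = k),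
        WHT x j * sgn (ip p j) := by
  have hAT : IsUnit Aᵀ.det := by rwa [det_transpose]
  rw [← sum_filter_PsiT_WHT hb (fun t => x (A *ᵥ t + p))]
  exact (sum_bijective _ (mulVec_bijective_of_isUnit_det hAT) (by simp) fun j _ =>
    (WHT_comp_affine x hA p j).symm).symm
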